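/- Asymptotic normalization for the payoff λ-calculus: the parallel weak reduction ⇒pw is deterministic (each configuration has exactly one ⇒pw-successor); ⇒pw is asymptotically complete for ⊳w and for → (if c ⊳w⇓ n̄, or c →⇓ n̄, then c ⇒pw⇓ n̄' for some n̄' with n̄ ≤ n̄'); and for every configuration c, the set Lim(c,→) = { n̄ ∈ ℕ∞ : c →⇓ n̄ } has a greatest element ⟦c⟧ and the unique ⇒pw-sequence from c has limit ⟦c⟧. -/

import Mathlib

/-- Terms of the payoff λ-calculus `Λtick`, in de Bruijn representation:
`M ::= x | λx.M | M M | tick M`. -/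
inductive TTm : Type
  | var : ℕ → TTm
  | lam : TTm → TTm
  | app : TTm → TTm → TTm
  | tick : TTm → TTm
deriving DecidableEq

namespace TTm

/-- Lift (shift by one) the free variables of index `≥ d`. -/
def lift (d : ℕ) : TTm → TTm
  | var n => if n < d then var n else var (n + 1)
  | lam M => lam (lift (d + 1) M)
  | app M N => app (lift d M) (lift d N)
  | tick M => tick (lift d M)

/-- Capture-avoiding substitution `M[N/k]`. -/
def subst : TTm → ℕ → TTm → TTm
  | var n, k, N => if n = k then N else if k < n then var (n - 1) else var n
  | lam M, k, N => lam (subst M (k + 1) (lift 0 N))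
  | app M₁ M₂, k, N => app (subst M₁ k N) (subst M₂ k N)
  | tick M, k, N => tick (subst M k N)

end TTm

/-- Values: variables and abstractions. -/
inductive IsVal : TTm → Prop
  | var (n : ℕ) : IsVal (TTm.var n)
  | lam (M : TTm) : IsVal (TTm.lam M)

/-- The root rule `(λx.M)V ↦βv M[V/x]`, for `V` a value. -/
inductive RootBv : TTm → TTm → Prop
  | beta {M V} : IsVal V → RootBv (TTm.app (TTm.lam M) V) (M.subst 0 V)

/-- Full βv-reduction on terms: closure of `↦βv` under arbitrary contexts. -/
inductive FullBv : TTm → TTm → Prop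
  | root {M M'} : RootBv M M' → FullBv M M'
  | lam {M M'} : FullBv M M' → FullBv (TTm.lam M) (TTm.lam M')
  | appL {M M' N} : FullBv M M' → FullBv (TTm.app M N) (TTm.app M' N)
  | appR {M N N'} : FullBv N N' → FullBv (TTm.app M N) (TTm.app M N')
  | tick {M M'} : FullBv M M' → FullBv (TTm.tick M) (TTm.tick M')

/-- Weak βv-reduction: closure of `↦βv` under weak contexts `W ::= ⟨⟩ | W M | M W`. -/
inductive WeakBv : TTm → TTm → Prop
  | root {M M'} : RootBv M M' → WeakBv M M'
  | appL {M M' N} : WeakBv M M' → WeakBv (TTm.app M N) (TTm.app M' N)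
  | appR {M N N'} : WeakBv N N' → WeakBv (TTm.app M N) (TTm.app M N')

/-- The tick rule under weak contexts: `W⟨tick P⟩ → W⟨P⟩`. -/
inductive WTick : TTm → TTm → Prop
  | root (P : TTm) : WTick (TTm.tick P) P
  | appL {M M' N} : WTick M M' → WTick (TTm.app M N) (TTm.app M' N)
  | appR {M N N'} : WTick N N' → WTick (TTm.app M N) (TTm.app M N')

/-- Full reduction `→ := →βv ∪ →tick` on configurations `(n, M)`:
βv-steps keep the counter, tick-steps (in weak position) increment it. -/
def FullRed : ℕ × TTm → ℕ × TTm → Prop := fun c c' =>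
  (FullBv c.2 c'.2 ∧ c'.1 = c.1) ∨ (WTick c.2 c'.2 ∧ c'.1 = c.1 + 1)

/-- Weak reduction `⊳w := →w,βv ∪ →tick` on configurations. -/
def WeakRed : ℕ × TTm → ℕ × TTm → Prop := fun c c' =>
  (WeakBv c.2 c'.2 ∧ c'.1 = c.1) ∨ (WTick c.2 c'.2 ∧ c'.1 = c.1 + 1)

/-- The observation: the payoff counter, in `ℕ∞ = ℕ ∪ {∞}`. -/
def obs (c : ℕ × TTm) : ℕ∞ := (c.1 : ℕ∞)

/-- A configuration is `R`-normal if it has no `R`-successor. -/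
def CNormal (R : ℕ × TTm → ℕ × TTm → Prop) (c : ℕ × TTm) : Prop := ∀ d, ¬ R c d

/-- An `R`-sequence from `c`: at each step either an `R`-step is performed, or the
current configuration is `R`-normal and the sequence stays constant. -/
def CSeq (R : ℕ × TTm → ℕ × TTm → Prop) (c : ℕ × TTm) (f : ℕ → ℕ × TTm) : Prop :=
  f 0 = c ∧ ∀ i, R (f i) (f (i + 1)) ∨ (CNormal R (f i) ∧ f (i + 1) = f i)

/-- `c R⇓ n̄` : some `R`-sequence from `c` has limit (supremum of payoffs) `n̄ ∈ ℕ∞`. -/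
def CConv (R : ℕ × TTm → ℕ × TTm → Prop) (c : ℕ × TTm) (p : ℕ∞) : Prop :=
  ∃ f : ℕ → ℕ × TTm, CSeq R c f ∧ IsLUB (Set.range fun i => obs (f i)) p

/-- Parallel weak reduction `⇒pw` on configurations. -/
inductive Pw : ℕ × TTm → ℕ × TTm → Prop
  | root {M M'} : RootBv M M' → Pw (0, M) (0, M')
  | tick (P : TTm) : Pw (0, TTm.tick P) (1, P)
  | value {V} : IsVal V → Pw (0, V) (0, V)
  | app {P₁ P₂ k₁ k₂ P₁' P₂'} : (∀ N, ¬ RootBv (TTm.app P₁ P₂) N) →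
      Pw (0, P₁) (k₁, P₁') → Pw (0, P₂) (k₂, P₂') →
      Pw (0, TTm.app P₁ P₂) (k₁ + k₂, TTm.app P₁' P₂')
  | pos {n M k M'} : 0 < n → Pw (0, M) (k, M') → Pw (n, M) (n + k, M')

/-!
`⇒pw` contracts at once every weak redex not nested in another one, so it is deterministic and
total. It commutes with any parallel contraction `WeakPar` of disjoint weak redexes while
performing at least as many ticks, so the payoff after `j` steps of `⊳w` is at most the payoff
after `j` steps of `⇒pw`. A βv-step anywhere is a graded parallel βv-step, which can be postponed past
weak steps without losing payoff; hence every `→`-reduction is dominated by a `⊳w`-reduction,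
and every limit in `Lim(c, →)` is at most the `⇒pw`-limit `⟦c⟧`. Conversely, each `⇒pw`-step is
a finite `⊳w`-reduction, and chaining these (continuing arbitrarily once `⇒pw` reaches a fixed
point) yields a `→`-sequence with limit `⟦c⟧`.
-/

open Relation

theorem Relation.ReflTransGen.postpone {α : Type*} {r s : α → α → Prop}
    (h : ∀ a b c, s a b → r b c → ∃ d, ReflTransGen r a d ∧ s d c) {a b c : α} (hab : s a b)
    (hbc : ReflTransGen r b c) : ∃ d, ReflTransGen r a d ∧ s d c := by
  induction hbc with
  | refl => exact ⟨a, .refl, hab⟩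
  | tail _ hstep ih =>
    obtain ⟨d, had, hd⟩ := ih
    obtain ⟨d', hdd', hd'⟩ := h _ _ _ hd hstep
    exact ⟨d', had.trans hdd', hd'⟩

section Walk

variable {α : Type*} (R : α → α → Prop) (path : α → List α)

open Classical in
noncomputable def stepOrStay (a : α) : α := if h : ∃ b, R a b then h.choose else a

theorem stepOrStay_spec (a : α) :
    R a (stepOrStay R a) ∨ ((∀ b, ¬ R a b) ∧ stepOrStay R a = a) := by
  unfold stepOrStay
  split_ifs with h
  · exact Or.inl h.choose_spec
  · exact Or.inr ⟨not_exists.mp h, rfl⟩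

-- A state is the current point together with the rest of the path being followed.
noncomputable def walkStep : α × List α → α × List α
  | (_, b :: l) => (b, l)
  | (a, []) =>
    match path a with
    | b :: l => (b, l)
    | [] => (stepOrStay R a, [])

variable {R path}

theorem walkStep_spec (hpath : ∀ a, List.IsChain R (a :: path a)) {s : α × List α}
    (hs : List.IsChain R (s.1 :: s.2)) :
    List.IsChain R ((walkStep R path s).1 :: (walkStep R path s).2) ∧
      (R s.1 (walkStep R path s).1 ∨ ((∀ b, ¬ R s.1 b) ∧ (walkStep R path s).1 = s.1)) := by
  obtain ⟨a, _ | ⟨b, l⟩⟩ := s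
  · have ha := hpath a
    simp only [walkStep]
    split
    · next b l heq =>
      rw [heq, List.isChain_cons_cons] at ha
      exact ⟨ha.2, Or.inl ha.1⟩
    · exact ⟨List.IsChain.singleton _, stepOrStay_spec R a⟩
  · rw [List.isChain_cons_cons] at hs
    exact ⟨hs.2, Or.inl hs.1⟩

theorem walkStep_iterate_length (a : α) (l : List α) :
    (walkStep R path)^[l.length] (a, l) = ((a :: l).getLast (List.cons_ne_nil _ _), []) := by
  induction l generalizing a with
  | nil => rfl
  | cons b l ih =>
    rw [List.length_cons, Function.iterate_succ_apply, List.getLast_cons_cons]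
    exact ih b

theorem exists_walkStep_iterate_eq {F : α → α}
    (hlast : ∀ a, (a :: path a).getLast (List.cons_ne_nil _ _) = F a) (a : α) :
    ∃ m, (walkStep R path)^[m] (a, []) = (F a, []) := by
  have ha := hlast a
  cases h : path a with
  | nil =>
    simp only [h, List.getLast_singleton] at ha
    exact ⟨0, by rw [← ha]; rfl⟩
  | cons b l =>
    have hstep : walkStep R path (a, []) = walkStep R path (a, b :: l) := by
      simp only [walkStep, h]
    refine ⟨(b :: l).length, ?_⟩
    calc (walkStep R path)^[(b :: l).length] (a, [])
        = (walkStep R path)^[l.length] (walkStep R path (a, [])) := rfl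
      _ = (walkStep R path)^[(b :: l).length] (a, b :: l) := by rw [hstep]; rfl
      _ = (F a, []) := by rw [walkStep_iterate_length, ← h, ha]

end Walk

theorem exists_cseq_forall_exists_eq_iterate {R : ℕ × TTm → ℕ × TTm → Prop}
    {F : ℕ × TTm → ℕ × TTm} (hF : ∀ a, ReflTransGen R a (F a)) (c : ℕ × TTm) :
    ∃ f, CSeq R c f ∧ ∀ i, ∃ n, f n = F^[i] c := by
  choose path hchain hlast using fun a => List.exists_isChain_cons_of_relationReflTransGen (hF a)
  set s := fun n => (walkStep R path)^[n] (c, [])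
  have hinv : ∀ n, List.IsChain R ((s n).1 :: (s n).2) := by
    intro n
    induction n with
    | zero => exact .singleton c
    | succ n ih => simpa only [s, Function.iterate_succ_apply'] using (walkStep_spec hchain ih).1
  have hvisit : ∀ i, ∃ n, s n = (F^[i] c, []) := by
    intro i
    induction i with
    | zero => exact ⟨0, rfl⟩
    | succ i ih =>
      obtain ⟨n, hn⟩ := ih
      obtain ⟨m, hm⟩ := exists_walkStep_iterate_eq hlast (F^[i] c)
      refine ⟨m + n, ?_⟩
      rw [Function.iterate_succ_apply', ← hm, ← hn]
      exact Function.iterate_add_apply _ _ _ _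
  refine ⟨fun n => (s n).1, ⟨rfl, fun n => ?_⟩, fun i => ?_⟩
  · show R (s n).1 (s (n + 1)).1 ∨ (CNormal R (s n).1 ∧ (s (n + 1)).1 = (s n).1)
    rw [show s (n + 1) = walkStep R path (s n) from Function.iterate_succ_apply' _ _ _]
    exact (walkStep_spec hchain (hinv n)).2
  · obtain ⟨n, hn⟩ := hvisit i
    exact ⟨n, congrArg Prod.fst hn⟩

theorem CSeq.reflTransGen {R : ℕ × TTm → ℕ × TTm → Prop} {c : ℕ × TTm} {f : ℕ → ℕ × TTm}
    (h : CSeq R c f) (i : ℕ) : ReflTransGen R c (f i) := by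
  induction i with
  | zero => rw [h.1]
  | succ i ih =>
    rcases h.2 i with hstep | ⟨-, heq⟩
    · exact ih.tail hstep
    · rwa [heq]

namespace TTm

theorem lift_lift (M : TTm) {i j : ℕ} (h : i ≤ j) :
    (M.lift j).lift i = (M.lift i).lift (j + 1) := by
  induction M generalizing i j with
  | var n => grind [lift]
  | lam M ih => simp only [lift, ih (Nat.succ_le_succ h)]
  | app M N ihM ihN => simp only [lift, ihM h, ihN h]
  | tick M ih => simp only [lift, ih h]

theorem subst_lift (M : TTm) (k : ℕ) (N : TTm) : (M.lift k).subst k N = M := by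
  induction M generalizing k N with
  | var n => grind [lift, subst]
  | lam M ih => simp only [lift, subst, ih]
  | app M N ihM ihN => simp only [lift, subst, ihM, ihN]
  | tick M ih => simp only [lift, subst, ih]

theorem lift_subst_of_le (M : TTm) {i k : ℕ} (N : TTm) (h : i ≤ k) :
    (M.subst k N).lift i = (M.lift i).subst (k + 1) (N.lift i) := by
  induction M generalizing i k N with
  | var n => grind [lift, subst]
  | lam M ih =>
    simp only [subst, lift, ih _ (Nat.succ_le_succ h), lift_lift N (Nat.zero_le i)]
  | app M₁ M₂ ih₁ ih₂ => simp only [subst, lift, ih₁ N h, ih₂ N h]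
  | tick M ih => simp only [subst, lift, ih N h]

theorem lift_subst_of_ge (M : TTm) {i k : ℕ} (N : TTm) (h : k ≤ i) :
    (M.subst k N).lift i = (M.lift (i + 1)).subst k (N.lift i) := by
  induction M generalizing i k N with
  | var n => grind [lift, subst]
  | lam M ih =>
    simp only [subst, lift, ih _ (Nat.succ_le_succ h), lift_lift N (Nat.zero_le i)]
  | app M₁ M₂ ih₁ ih₂ => simp only [subst, lift, ih₁ N h, ih₂ N h]
  | tick M ih => simp only [subst, lift, ih N h]

theorem subst_subst (A : TTm) (i j : ℕ) (N L : TTm) :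
    (A.subst i N).subst (i + j) L =
      (A.subst (i + j + 1) (L.lift i)).subst i (N.subst (i + j) L) := by
  induction A generalizing i N L with
  | var n => grind [subst, subst_lift]
  | lam A ih =>
    have h := ih (i + 1) (N.lift 0) (L.lift 0)
    rw [show i + 1 + j = i + j + 1 by omega] at h
    simp only [subst, h, lift_lift L (Nat.zero_le i), lift_subst_of_le N L (Nat.zero_le (i + j))]
  | app A B ihA ihB => simp only [subst, ihA, ihB]
  | tick A ih => simp only [subst, ih]

end TTm

theorem IsVal.lift {V : TTm} (h : IsVal V) (d : ℕ) : IsVal (V.lift d) := by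
  cases h with
  | var n => simp only [TTm.lift]; split_ifs <;> exact IsVal.var _
  | lam M => exact IsVal.lam _

theorem IsVal.subst {V W : TTm} (hV : IsVal V) (hW : IsVal W) (k : ℕ) : IsVal (V.subst k W) := by
  cases hV with
  | var n => simp only [TTm.subst]; split_ifs <;> first | exact hW | exact IsVal.var _
  | lam M => exact IsVal.lam _

theorem RootBv.unique {M N N' : TTm} (h : RootBv M N) (h' : RootBv M N') : N = N' := by
  cases h; cases h'; rfl

theorem IsVal.not_rootBv {V N : TTm} (hV : IsVal V) : ¬ RootBv V N := by
  rintro ⟨-⟩; cases hV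

theorem Pw.unique {a b b' : ℕ × TTm} (h : Pw a b) (h' : Pw a b') : b = b' := by
  induction h generalizing b' with
  | root hr =>
    cases h' with
    | root hr' => rw [hr.unique hr']
    | tick P => cases hr
    | value hv => exact absurd hr hv.not_rootBv
    | app hnr _ _ => exact absurd hr (hnr _)
    | pos hp _ => omega
  | tick P =>
    cases h' with
    | root hr => cases hr
    | tick => rfl
    | value hv => cases hv
    | pos hp _ => omega
  | value hv =>
    cases h' with
    | root hr => exact absurd hr hv.not_rootBv
    | tick => cases hv
    | value => rfl
    | app _ _ _ => cases hv
    | pos hp _ => omega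
  | app hnr _ _ ih₁ ih₂ =>
    cases h' with
    | root hr => exact absurd hr (hnr _)
    | value hv => cases hv
    | app _ h₁ h₂ => obtain ⟨⟨⟩, ⟨⟩⟩ := ih₁ h₁, ih₂ h₂; rfl
    | pos hp _ => omega
  | pos hp _ ih =>
    cases h' with
    | pos _ h => obtain ⟨⟩ := ih h; rfl
    | _ => omega

theorem Pw.exists_of_zero (M : TTm) : ∃ k N, Pw (0, M) (k, N) := by
  induction M with
  | var n => exact ⟨_, _, Pw.value (IsVal.var n)⟩
  | lam M => exact ⟨_, _, Pw.value (IsVal.lam M)⟩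
  | app A B ihA ihB =>
    by_cases h : ∃ N, RootBv (TTm.app A B) N
    · obtain ⟨N, hN⟩ := h
      exact ⟨_, _, Pw.root hN⟩
    · obtain ⟨k₁, A', hA⟩ := ihA
      obtain ⟨k₂, B', hB⟩ := ihB
      exact ⟨_, _, Pw.app (not_exists.mp h) hA hB⟩
  | tick M => exact ⟨_, _, Pw.tick M⟩

theorem Pw.exists (c : ℕ × TTm) : ∃ d, Pw c d := by
  obtain ⟨n, M⟩ := c
  obtain ⟨k, N, h⟩ := Pw.exists_of_zero M
  rcases Nat.eq_zero_or_pos n with rfl | hn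
  · exact ⟨_, h⟩
  · exact ⟨_, Pw.pos hn h⟩

noncomputable def pwNext (c : ℕ × TTm) : ℕ × TTm := (Pw.exists c).choose

theorem pw_pwNext (c : ℕ × TTm) : Pw c (pwNext c) := (Pw.exists c).choose_spec

theorem Pw.eq_pwNext {c d : ℕ × TTm} (h : Pw c d) : d = pwNext c := h.unique (pw_pwNext c)

theorem pwNext_eq_of_pw {M N : TTm} {k : ℕ} (h : Pw (0, M) (k, N)) (n : ℕ) :
    pwNext (n, M) = (n + k, N) := by
  rcases Nat.eq_zero_or_pos n with rfl | hn
  · rw [zero_add]; exact h.eq_pwNext.symm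
  · exact (Pw.pos hn h).eq_pwNext.symm

theorem exists_pw_and_pwNext_eq (n : ℕ) (M : TTm) :
    ∃ k N, Pw (0, M) (k, N) ∧ pwNext (n, M) = (n + k, N) := by
  obtain ⟨k, N, h⟩ := Pw.exists_of_zero M
  exact ⟨k, N, h, pwNext_eq_of_pw h n⟩

/-- The limit `⟦c⟧` of the `⇒pw`-sequence from `c`. -/
noncomputable def pwLimit (c : ℕ × TTm) : ℕ∞ := ⨆ i, obs (pwNext^[i] c)

theorem CSeq.eq_pwNext_iterate {c : ℕ × TTm} {f : ℕ → ℕ × TTm} (h : CSeq Pw c f) (i : ℕ) :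
    f i = pwNext^[i] c := by
  induction i with
  | zero => exact h.1
  | succ i ih =>
    rcases h.2 i with hstep | ⟨hnormal, -⟩
    · rw [Function.iterate_succ_apply', ← ih, hstep.eq_pwNext]
    · exact absurd (pw_pwNext _) (hnormal _)

theorem cconv_pw_pwLimit (c : ℕ × TTm) : CConv Pw c (pwLimit c) := by
  refine ⟨fun i => pwNext^[i] c, ⟨rfl, fun i => Or.inl ?_⟩, isLUB_iSup⟩
  simpa only [Function.iterate_succ_apply'] using pw_pwNext _

inductive WeakPar : TTm → ℕ → TTm → Prop
  | refl (M : TTm) : WeakPar M 0 M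
  | tick (P : TTm) : WeakPar (TTm.tick P) 1 P
  | app {A t A' B s B'} : WeakPar A t A' → WeakPar B s B' →
      WeakPar (TTm.app A B) (t + s) (TTm.app A' B')
  | beta {A V : TTm} : IsVal V → WeakPar (TTm.app (TTm.lam A) V) 0 (A.subst 0 V)

theorem Pw.weakPar {M N : TTm} {k : ℕ} (h : Pw (0, M) (k, N)) : WeakPar M k N := by
  suffices ∀ {c d : ℕ × TTm}, Pw c d → c.1 = 0 → WeakPar c.2 d.1 d.2 from this h rfl
  intro c d h hc
  induction h with
  | root hr => cases hr with | beta hv => exact WeakPar.beta hv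
  | tick P => exact WeakPar.tick P
  | value _ => exact WeakPar.refl _
  | app _ _ _ ih₁ ih₂ => exact WeakPar.app (ih₁ rfl) (ih₂ rfl)
  | pos hp _ _ => exact absurd hc hp.ne'

theorem WeakPar.eq_of_isVal {X X' : TTm} {t : ℕ} (hv : IsVal X) (h : WeakPar X t X') :
    t = 0 ∧ X' = X := by
  cases hv <;> cases h <;> exact ⟨rfl, rfl⟩

theorem WeakPar.pw_of_isVal {X X' : TTm} {t : ℕ} (h : WeakPar X t X') (hv : IsVal X') :
    Pw (0, X) (t, X') := by
  cases h with
  | refl => exact Pw.value hv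
  | tick => exact Pw.tick _
  | app => cases hv
  | beta hV => exact Pw.root (RootBv.beta hV)

theorem WeakPar.le_of_pw {M M' N : TTm} {t k : ℕ} (h : WeakPar M t M') (hp : Pw (0, M) (k, N)) :
    t ≤ k := by
  induction h generalizing k N with
  | refl => exact Nat.zero_le _
  | tick P => cases hp with
    | root hr => cases hr
    | tick => rfl
    | value hv => cases hv
    | pos hp _ => omega
  | app hA hB ihA ihB => cases hp with
    | root hr =>
      cases hr with
      | beta hv => rw [(hA.eq_of_isVal (IsVal.lam _)).1, (hB.eq_of_isVal hv).1]
    | value hv => cases hv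
    | app _ hA' hB' => exact Nat.add_le_add (ihA hA') (ihB hB')
    | pos hp _ => omega
  | beta => exact Nat.zero_le _

theorem WeakPar.pw_diamond {M M' N N' : TTm} {t k k' : ℕ} (h : WeakPar M t M')
    (hp : Pw (0, M) (k, N)) (hp' : Pw (0, M') (k', N')) :
    ∃ s, WeakPar N s N' ∧ t + k' = k + s := by
  induction h generalizing k N k' N' with
  | refl M =>
    obtain ⟨⟩ := hp.unique hp'
    exact ⟨0, WeakPar.refl _, by omega⟩
  | tick P => cases hp with
    | root hr => cases hr
    | tick => exact ⟨k', hp'.weakPar, rfl⟩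
    | value hv => cases hv
    | pos hp _ => omega
  | beta hv => cases hp with
    | root hr => cases hr with
      | beta => exact ⟨k', hp'.weakPar, rfl⟩
    | value hv' => cases hv'
    | app hnr _ _ => exact absurd (RootBv.beta hv) (hnr _)
    | pos hp _ => omega
  | app hA hB ihA ihB => cases hp with
    | root hr => cases hr with
      | beta hv =>
        obtain ⟨rfl, rfl⟩ := hA.eq_of_isVal (IsVal.lam _)
        obtain ⟨rfl, rfl⟩ := hB.eq_of_isVal hv
        obtain ⟨⟩ := (Pw.root (RootBv.beta hv)).unique hp'
        exact ⟨0, WeakPar.refl _, rfl⟩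
    | value hv => cases hv
    | pos hp _ => omega
    | app _ hA₁ hB₁ => cases hp' with
      | root hr => cases hr with
        | beta hv' =>
          obtain ⟨⟩ := hA₁.unique (hA.pw_of_isVal (IsVal.lam _))
          obtain ⟨⟩ := hB₁.unique (hB.pw_of_isVal hv')
          exact ⟨0, WeakPar.beta hv', by omega⟩
      | value hv => cases hv
      | app _ hA₁' hB₁' =>
        obtain ⟨s₁, hs₁, e₁⟩ := ihA hA₁ hA₁'
        obtain ⟨s₂, hs₂, e₂⟩ := ihB hB₁ hB₁'
        exact ⟨s₁ + s₂, WeakPar.app hs₁ hs₂, by omega⟩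
      | pos hp _ => omega

def WeakParRed (c d : ℕ × TTm) : Prop := ∃ t, WeakPar c.2 t d.2 ∧ d.1 = c.1 + t

theorem WeakParRed.map_pwNext {c d : ℕ × TTm} (h : WeakParRed c d) :
    WeakParRed (pwNext c) (pwNext d) := by
  obtain ⟨t, h, hd⟩ := h
  obtain ⟨n, M⟩ := c
  obtain ⟨m, M'⟩ := d
  obtain ⟨k, N, hk, hN⟩ := exists_pw_and_pwNext_eq n M
  obtain ⟨k', N', hk', hN'⟩ := exists_pw_and_pwNext_eq m M'
  obtain ⟨s, hs, hbal⟩ := h.pw_diamond hk hk'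
  rw [hN, hN']
  exact ⟨s, hs, by simp only at hd ⊢; omega⟩

theorem WeakParRed.fst_le_pwNext {c d : ℕ × TTm} (h : WeakParRed c d) : d.1 ≤ (pwNext c).1 := by
  obtain ⟨t, h, hd⟩ := h
  obtain ⟨k, N, hk, hN⟩ := exists_pw_and_pwNext_eq c.1 c.2
  rw [hN, hd]
  exact Nat.add_le_add_left (h.le_of_pw hk) _

theorem WeakParRed.fst_iterate_le {c d : ℕ × TTm} (h : WeakParRed c d) (j : ℕ) :
    (pwNext^[j] d).1 ≤ (pwNext^[j + 1] c).1 := by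
  induction j generalizing c d with
  | zero => exact h.fst_le_pwNext
  | succ j ih => exact ih h.map_pwNext

theorem exists_fst_le_pwNext_iterate {c d : ℕ × TTm} (h : ReflTransGen WeakParRed c d) :
    ∃ j, d.1 ≤ (pwNext^[j] c).1 := by
  induction h using ReflTransGen.head_induction_on with
  | refl => exact ⟨0, le_rfl⟩
  | head hstep _ ih =>
    obtain ⟨j, hj⟩ := ih
    exact ⟨j + 1, hj.trans (WeakParRed.fst_iterate_le hstep j)⟩

theorem WeakBv.weakPar {M M' : TTm} (h : WeakBv M M') : WeakPar M 0 M' := by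
  induction h with
  | root hr => cases hr with | beta hv => exact WeakPar.beta hv
  | appL _ ih => exact WeakPar.app ih (WeakPar.refl _)
  | appR _ ih => exact WeakPar.app (WeakPar.refl _) ih

theorem WTick.weakPar {M M' : TTm} (h : WTick M M') : WeakPar M 1 M' := by
  induction h with
  | root P => exact WeakPar.tick P
  | appL _ ih => exact WeakPar.app ih (WeakPar.refl _)
  | appR _ ih => exact WeakPar.app (WeakPar.refl _) ih

theorem WeakRed.weakParRed {c d : ℕ × TTm} (h : WeakRed c d) : WeakParRed c d := by
  rcases h with ⟨h, hd⟩ | ⟨h, hd⟩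
  · exact ⟨0, h.weakPar, hd⟩
  · exact ⟨1, h.weakPar, hd⟩

theorem obs_le_pwLimit_of_weakRed {c d : ℕ × TTm} (h : ReflTransGen WeakRed c d) :
    obs d ≤ pwLimit c := by
  obtain ⟨j, hj⟩ :=
    exists_fst_le_pwNext_iterate (ReflTransGen.mono (fun _ _ => WeakRed.weakParRed) _ _ h)
  exact (Nat.cast_le.mpr hj).trans (le_iSup (fun i => obs (pwNext^[i] c)) j)

/-- The grade counts the contracted redexes not lying under an uncontracted λ. Values have
grade `0`, so substituting a value keeps the grade, while performing a contracted redex as a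
weak step lowers it by one. -/
inductive ParBv : ℕ → TTm → TTm → Prop
  | var (n : ℕ) : ParBv 0 (TTm.var n) (TTm.var n)
  | lam {a M M'} : ParBv a M M' → ParBv 0 (TTm.lam M) (TTm.lam M')
  | tick {a M M'} : ParBv a M M' → ParBv a (TTm.tick M) (TTm.tick M')
  | app {a b A A' B B'} : ParBv a A A' → ParBv b B B' →
      ParBv (a + b) (TTm.app A B) (TTm.app A' B')
  | beta {a b D D' U U'} : ParBv a D D' → ParBv b U U' → IsVal U →
      ParBv (a + 1) (TTm.app (TTm.lam D) U) (D'.subst 0 U')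

theorem ParBv.refl (M : TTm) : ParBv 0 M M := by
  induction M with
  | var n => exact ParBv.var n
  | lam _ ih => exact ParBv.lam ih
  | app _ _ ihA ihB => exact ParBv.app ihA ihB
  | tick _ ih => exact ParBv.tick ih

theorem FullBv.exists_parBv {M M' : TTm} (h : FullBv M M') : ∃ g, ParBv g M M' := by
  induction h with
  | root hr => cases hr with | beta hv => exact ⟨_, ParBv.beta (.refl _) (.refl _) hv⟩
  | lam _ ih => obtain ⟨g, hg⟩ := ih; exact ⟨0, ParBv.lam hg⟩
  | appL _ ih => obtain ⟨g, hg⟩ := ih; exact ⟨_, ParBv.app hg (.refl _)⟩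
  | appR _ ih => obtain ⟨g, hg⟩ := ih; exact ⟨_, ParBv.app (.refl _) hg⟩
  | tick _ ih => obtain ⟨g, hg⟩ := ih; exact ⟨g, ParBv.tick hg⟩

theorem ParBv.of_isVal {V V' : TTm} {g : ℕ} (hv : IsVal V) (h : ParBv g V V') :
    g = 0 ∧ IsVal V' := by
  cases hv <;> cases h
  · exact ⟨rfl, IsVal.var _⟩
  · exact ⟨rfl, IsVal.lam _⟩

theorem ParBv.lift {g : ℕ} {M M' : TTm} (h : ParBv g M M') (d : ℕ) :
    ParBv g (M.lift d) (M'.lift d) := by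
  induction h generalizing d with
  | var n => simp only [TTm.lift]; split_ifs <;> exact ParBv.var _
  | lam _ ih => exact ParBv.lam (ih _)
  | tick _ ih => exact ParBv.tick (ih d)
  | app _ _ ihA ihB => exact ParBv.app (ihA d) (ihB d)
  | @beta a b D D' U U' _ _ hv ihD ihU =>
    rw [TTm.lift_subst_of_ge D' U' (Nat.zero_le d)]
    exact ParBv.beta (ihD _) (ihU d) (hv.lift d)

theorem ParBv.subst {a b : ℕ} {A A' W W' : TTm} (h : ParBv a A A') (k : ℕ)
    (hW : ParBv b W W') (hv : IsVal W) : ParBv a (A.subst k W) (A'.subst k W') := by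
  obtain ⟨rfl, -⟩ := hW.of_isVal hv
  induction h generalizing k W W' with
  | var n =>
    simp only [TTm.subst]
    split_ifs
    · exact hW
    · exact ParBv.var _
    · exact ParBv.var _
  | lam _ ih => exact ParBv.lam (ih _ (hv.lift 0) (hW.lift 0))
  | tick _ ih => exact ParBv.tick (ih k hv hW)
  | app _ _ ihA ihB => exact ParBv.app (ihA k hv hW) (ihB k hv hW)
  | @beta a b D D' U U' _ _ hU ihD ihU =>
    have e := TTm.subst_subst D' 0 k U' W'
    simp only [zero_add] at e
    rw [TTm.subst, e]
    exact ParBv.beta (ihD _ (hv.lift 0) (hW.lift 0)) (ihU k hv hW) (hU.subst hv k)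

theorem WeakRed.app_left (Q : TTm) {c d : ℕ × TTm} (h : WeakRed c d) :
    WeakRed (c.1, TTm.app c.2 Q) (d.1, TTm.app d.2 Q) := by
  rcases h with ⟨h, hd⟩ | ⟨h, hd⟩
  exacts [Or.inl ⟨h.appL, hd⟩, Or.inr ⟨h.appL, hd⟩]

theorem WeakRed.app_right (Q : TTm) {c d : ℕ × TTm} (h : WeakRed c d) :
    WeakRed (c.1, TTm.app Q c.2) (d.1, TTm.app Q d.2) := by
  rcases h with ⟨h, hd⟩ | ⟨h, hd⟩
  exacts [Or.inl ⟨h.appR, hd⟩, Or.inr ⟨h.appR, hd⟩]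

theorem reflTransGen_weakRed_app_left (Q : TTm) {c d : ℕ × TTm}
    (h : ReflTransGen WeakRed c d) :
    ReflTransGen WeakRed (c.1, TTm.app c.2 Q) (d.1, TTm.app d.2 Q) :=
  ReflTransGen.lift (fun c : ℕ × TTm => (c.1, TTm.app c.2 Q))
    (fun _ _ => WeakRed.app_left Q) _ _ h

theorem reflTransGen_weakRed_app_right (Q : TTm) {c d : ℕ × TTm}
    (h : ReflTransGen WeakRed c d) :
    ReflTransGen WeakRed (c.1, TTm.app Q c.2) (d.1, TTm.app Q d.2) :=
  ReflTransGen.lift (fun c : ℕ × TTm => (c.1, TTm.app Q c.2))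
    (fun _ _ => WeakRed.app_right Q) _ _ h

theorem reflTransGen_weakRed_of_weakBv (n : ℕ) {M N : TTm} (h : ReflTransGen WeakBv M N) :
    ReflTransGen WeakRed (n, M) (n, N) :=
  ReflTransGen.lift (fun M => (n, M)) (fun _ _ h => Or.inl ⟨h, rfl⟩) _ _ h

theorem reflTransGen_weakBv_app {A A' B B' : TTm} (hA : ReflTransGen WeakBv A A')
    (hB : ReflTransGen WeakBv B B') : ReflTransGen WeakBv (TTm.app A B) (TTm.app A' B') :=
  (ReflTransGen.lift (TTm.app · B) (fun _ _ => WeakBv.appL) _ _ hA).trans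
    (ReflTransGen.lift (TTm.app A') (fun _ _ => WeakBv.appR) _ _ hB)

theorem IsVal.not_weakRed {V : TTm} (hv : IsVal V) (n : ℕ) (c : ℕ × TTm) :
    ¬ WeakRed (n, V) c := by
  rintro (⟨h, -⟩ | ⟨h, -⟩) <;> cases hv <;> cases h <;> rename_i hr <;> cases hr

theorem WeakRed.eq_of_tick {n : ℕ} {P : TTm} {c : ℕ × TTm} (h : WeakRed (n, TTm.tick P) c) :
    c = (n + 1, P) := by
  rcases h with ⟨h, -⟩ | ⟨h, hc⟩
  · cases h with | root hr => cases hr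
  · cases h
    exact Prod.ext hc rfl

theorem WeakRed.app_cases {n : ℕ} {A B : TTm} {c : ℕ × TTm} (h : WeakRed (n, TTm.app A B) c) :
    (c.1 = n ∧ RootBv (TTm.app A B) c.2) ∨
      (∃ A', WeakRed (n, A) (c.1, A') ∧ c.2 = TTm.app A' B) ∨
      (∃ B', WeakRed (n, B) (c.1, B') ∧ c.2 = TTm.app A B') := by
  obtain ⟨m, Z⟩ := c
  rcases h with ⟨h, hc⟩ | ⟨h, hc⟩
  · cases h with
    | root hr => exact Or.inl ⟨hc, hr⟩
    | appL h => exact Or.inr (Or.inl ⟨_, Or.inl ⟨h, hc⟩, rfl⟩)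
    | appR h => exact Or.inr (Or.inr ⟨_, Or.inl ⟨h, hc⟩, rfl⟩)
  · cases h with
    | appL h => exact Or.inr (Or.inl ⟨_, Or.inr ⟨h, hc⟩, rfl⟩)
    | appR h => exact Or.inr (Or.inr ⟨_, Or.inr ⟨h, hc⟩, rfl⟩)

theorem ParBv.exists_weakBv_isVal {g : ℕ} {B B' : TTm} (h : ParBv g B B') (hv : IsVal B') :
    ∃ B₀, ReflTransGen WeakBv B B₀ ∧ IsVal B₀ ∧ ∃ g₀, ParBv g₀ B₀ B' := by
  induction g using Nat.strong_induction_on generalizing B with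
  | _ g ih =>
  cases h with
  | var n => exact ⟨_, .refl, IsVal.var n, _, ParBv.var n⟩
  | lam h => exact ⟨_, .refl, IsVal.lam _, _, ParBv.lam h⟩
  | tick => cases hv
  | app => cases hv
  | beta hD hU hvU =>
    obtain ⟨B₀, hB₀, hv₀, h₀⟩ := ih _ (Nat.lt_succ_self _) (hD.subst 0 hU hvU)
    exact ⟨B₀, .head (WeakBv.root (RootBv.beta hvU)) hB₀, hv₀, h₀⟩

theorem ParBv.exists_weakBv_of_rootBv {ga gb : ℕ} {A A₁ B B₁ Z : TTm} (hA : ParBv ga A A₁)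
    (hB : ParBv gb B B₁) (hr : RootBv (TTm.app A₁ B₁) Z) :
    ∃ X, ReflTransGen WeakBv (TTm.app A B) X ∧ ∃ g, ParBv g X Z := by
  rcases hr with ⟨hvB₁⟩
  obtain ⟨A₀, hA₀, hvA₀, _, hA₀₁⟩ := hA.exists_weakBv_isVal (IsVal.lam _)
  obtain ⟨B₀, hB₀, hvB₀, _, hB₀₁⟩ := hB.exists_weakBv_isVal hvB₁
  cases hvA₀ with
  | var => cases hA₀₁
  | lam C₀ =>
    cases hA₀₁ with
    | lam hC =>
      exact ⟨_, (reflTransGen_weakBv_app hA₀ hB₀).tail (WeakBv.root (RootBv.beta hvB₀)),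
        _, hC.subst 0 hB₀₁ hvB₀⟩

theorem ParBv.postpone_weakRed {g : ℕ} {M M₁ : TTm} {n : ℕ} {c : ℕ × TTm} (h : ParBv g M M₁)
    (hw : WeakRed (n, M₁) c) :
    ∃ X, ReflTransGen WeakRed (n, M) (c.1, X) ∧ ∃ g', ParBv g' X c.2 := by
  cases h with
  | var m => exact absurd hw ((IsVal.var m).not_weakRed n c)
  | lam => exact absurd hw ((IsVal.lam _).not_weakRed n c)
  | tick h =>
    obtain rfl := hw.eq_of_tick
    exact ⟨_, .single (Or.inr ⟨WTick.root _, rfl⟩), _, h⟩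
  | app hA hB =>
    rcases hw.app_cases with ⟨hc, hr⟩ | ⟨A₂, hA₂, hc⟩ | ⟨B₂, hB₂, hc⟩
    · obtain ⟨X, hX, hXc⟩ := hA.exists_weakBv_of_rootBv hB hr
      exact ⟨X, hc ▸ reflTransGen_weakRed_of_weakBv n hX, hXc⟩
    · obtain ⟨X, hX, g', hg'⟩ := hA.postpone_weakRed hA₂
      exact ⟨_, reflTransGen_weakRed_app_left _ hX, _, hc ▸ ParBv.app hg' hB⟩
    · obtain ⟨X, hX, g', hg'⟩ := hB.postpone_weakRed hB₂
      exact ⟨_, reflTransGen_weakRed_app_right _ hX, _, hc ▸ ParBv.app hA hg'⟩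
  | @beta _ _ D _ U _ hD hU hvU =>
    obtain ⟨X, hX, hXc⟩ := (hD.subst 0 hU hvU).postpone_weakRed hw
    have hβ : WeakRed (n, TTm.app (TTm.lam D) U) (n, D.subst 0 U) :=
      Or.inl ⟨WeakBv.root (RootBv.beta hvU), rfl⟩
    exact ⟨X, .head hβ hX, hXc⟩
termination_by (g, sizeOf M)
decreasing_by
  all_goals subst_vars; rw [Prod.lex_def]; simp only [TTm.app.sizeOf_spec]; omega

def ParRed (c d : ℕ × TTm) : Prop := c.1 = d.1 ∧ ∃ g, ParBv g c.2 d.2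

theorem ParRed.postpone_weakRed {c d e : ℕ × TTm} (h : ParRed c d) (hw : WeakRed d e) :
    ∃ x, ReflTransGen WeakRed c x ∧ ParRed x e := by
  obtain ⟨n, M⟩ := c
  obtain ⟨m, M₁⟩ := d
  obtain ⟨rfl, g, hg⟩ := h
  obtain ⟨X, hX, hXe⟩ := hg.postpone_weakRed hw
  exact ⟨_, hX, rfl, hXe⟩

theorem exists_weakRed_fst_le_of_fullRed {c e : ℕ × TTm} (h : ReflTransGen FullRed c e) :
    ∃ x, ReflTransGen WeakRed c x ∧ e.1 ≤ x.1 := by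
  induction h using ReflTransGen.head_induction_on with
  | refl => exact ⟨e, .refl, le_rfl⟩
  | head hstep _ ih =>
    obtain ⟨x, hx, hex⟩ := ih
    rcases hstep with ⟨hbv, hd⟩ | htick
    · obtain ⟨y, hy, hyx, -⟩ :=
        ReflTransGen.postpone (fun _ _ _ => ParRed.postpone_weakRed) ⟨hd.symm, hbv.exists_parBv⟩ hx
      exact ⟨y, hy, hex.trans hyx.ge⟩
    · exact ⟨x, .head (Or.inr htick) hx, hex⟩

theorem obs_le_pwLimit_of_fullRed {c e : ℕ × TTm} (h : ReflTransGen FullRed c e) :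
    obs e ≤ pwLimit c := by
  obtain ⟨x, hx, hex⟩ := exists_weakRed_fst_le_of_fullRed h
  exact (Nat.cast_le.mpr hex).trans (obs_le_pwLimit_of_weakRed hx)

theorem CConv.le_pwLimit {R : ℕ × TTm → ℕ × TTm → Prop} {c : ℕ × TTm} {p : ℕ∞}
    (hR : ∀ a b, R a b → FullRed a b) (h : CConv R c p) : p ≤ pwLimit c := by
  obtain ⟨f, hf, hp⟩ := h
  refine hp.2 ?_
  rintro _ ⟨i, rfl⟩
  exact obs_le_pwLimit_of_fullRed (ReflTransGen.mono hR _ _ (hf.reflTransGen i))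

theorem WeakBv.fullBv {M M' : TTm} (h : WeakBv M M') : FullBv M M' := by
  induction h with
  | root hr => exact FullBv.root hr
  | appL _ ih => exact FullBv.appL ih
  | appR _ ih => exact FullBv.appR ih

theorem WeakRed.fullRed {c d : ℕ × TTm} (h : WeakRed c d) : FullRed c d :=
  h.imp (And.imp_left WeakBv.fullBv) id

theorem WeakPar.reflTransGen_weakRed {M M' : TTm} {t : ℕ} (h : WeakPar M t M') (n : ℕ) :
    ReflTransGen WeakRed (n, M) (n + t, M') := by
  induction h generalizing n with
  | refl => exact .refl
  | tick P => exact .single (Or.inr ⟨WTick.root P, rfl⟩)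
  | app _ _ ihA ihB =>
    rw [← Nat.add_assoc]
    exact (reflTransGen_weakRed_app_left _ (ihA n)).trans
      (reflTransGen_weakRed_app_right _ (ihB _))
  | beta hv => exact .single (Or.inl ⟨WeakBv.root (RootBv.beta hv), rfl⟩)

theorem reflTransGen_fullRed_pwNext (c : ℕ × TTm) : ReflTransGen FullRed c (pwNext c) := by
  obtain ⟨k, N, hk, hN⟩ := exists_pw_and_pwNext_eq c.1 c.2
  rw [hN]
  exact ReflTransGen.mono (fun _ _ => WeakRed.fullRed) _ _ (hk.weakPar.reflTransGen_weakRed c.1)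

theorem cconv_fullRed_pwLimit (c : ℕ × TTm) : CConv FullRed c (pwLimit c) := by
  obtain ⟨f, hf, hvisit⟩ := exists_cseq_forall_exists_eq_iterate reflTransGen_fullRed_pwNext c
  refine ⟨f, hf, ?_, fun u hu => iSup_le fun i => ?_⟩
  · rintro _ ⟨n, rfl⟩
    exact obs_le_pwLimit_of_fullRed (hf.reflTransGen n)
  · obtain ⟨n, hn⟩ := hvisit i
    exact hn ▸ hu ⟨n, rfl⟩

/-- **Asymptotic normalization for the payoff λ-calculus**:
parallel weak reduction `⇒pw` is deterministic (each configuration has exactly one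
`⇒pw`-successor); `⇒pw` is asymptotically complete for `⊳w` and for `→`; and for every
configuration `c` the set `Lim(c, →)` has a greatest element `⟦c⟧`, which is the limit
of the (unique) `⇒pw`-sequence from `c`. -/
theorem payoff_asymptotic_normalization :
    (∀ c : ℕ × TTm, ∃! c', Pw c c') ∧
    (∀ (c : ℕ × TTm) (p : ℕ∞), (CConv WeakRed c p ∨ CConv FullRed c p) →
      ∃ p' : ℕ∞, p ≤ p' ∧ CConv Pw c p') ∧
    (∀ c : ℕ × TTm, ∃ g : ℕ∞, IsGreatest {p : ℕ∞ | CConv FullRed c p} g ∧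
      ∀ f, CSeq Pw c f → IsLUB (Set.range fun i => obs (f i)) g) := by
  refine ⟨fun c => ⟨pwNext c, pw_pwNext c, fun _ h => h.eq_pwNext⟩, ?_, fun c => ?_⟩
  · rintro c p (hp | hp)
    · exact ⟨pwLimit c, hp.le_pwLimit fun _ _ => WeakRed.fullRed, cconv_pw_pwLimit c⟩
    · exact ⟨pwLimit c, hp.le_pwLimit fun _ _ => id, cconv_pw_pwLimit c⟩
  · refine ⟨pwLimit c, ⟨cconv_fullRed_pwLimit c, fun p hp => hp.le_pwLimit fun _ _ => id⟩,
      fun f hf => ?_⟩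
    rw [funext hf.eq_pwNext_iterate]
    exact isLUB_iSup
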